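/- arXiv:1812.11041 — 6 statements merged into one kernel-verified Lean document; each statement's English description precedes it below -/
import Mathlib

section
/- Let a, b : ℕ → ℝ with a 0 = 1 and a n > 0 for n ≥ 1. There exists a family of real numbers w_{n,s} (n ≥ 1, s ≥ n), depending only on a and b and not on the control, such that for every control f : ℕ → ℝ and all integers 1 ≤ n ≤ t, the solution of the semi-infinite discrete-time dynamical system admits the representation u^f_{n,t} = (∏_{k=0}^{n−1} a_k) · f_{t−n} + ∑_{s=n}^{t−1} w_{n,s} f_{t−s−1}; moreover w satisfies the diagonal relation w_{n,n} = b_n ∏_{k=0}^{n−1} a_k + a_{n−1} w_{n−1,n−1} for n ≥ 1 (with w_{0,s} := 0 for all s). -/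
/-!
The system is a second-order recursion in time, so the control determines the solution. Let
`G` be the impulse response, the solution for the control `δ₀`. By linearity and time
invariance the causal convolution `∑_{j ≤ t} G_{n,j} f_{t-j}` is again a solution, hence it is
`u^f_{n,t}`. Finite propagation speed gives `G_{n,j} = 0` for `j < n` and
`G_{n,n} = ∏_{k<n} a_k`, so `w_{n,s} := G_{n,s+1}` works, and the diagonal relation is the
recursion for `G_{n,n+1}`.
-/

/-- `u` is the solution of the semi-infinite discrete-time dynamical system with
coefficients `a`, `b` and boundary control `f`. -/
def IsSolU (a b f : ℕ → ℝ) (u : ℕ → ℕ → ℝ) : Prop :=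
  (∀ n, 1 ≤ n → u n 0 = 0) ∧
  (∀ t, u 0 t = f t) ∧
  (∀ n t, 1 ≤ n →
    u n (t + 1) + u n (t - 1) - a n * u (n + 1) t - a (n - 1) * u (n - 1) t
      - b n * u n t = 0)

open Finset

theorem IsSolU.step {a b f : ℕ → ℝ} {u : ℕ → ℕ → ℝ} (hu : IsSolU a b f u) {n : ℕ}
    (hn : 1 ≤ n) (t : ℕ) :
    u n (t + 1) = a n * u (n + 1) t + a (n - 1) * u (n - 1) t + b n * u n t - u n (t - 1) := by
  linarith [hu.2.2 n t hn]

theorem IsSolU.unique {a b f : ℕ → ℝ} {u v : ℕ → ℕ → ℝ} (hu : IsSolU a b f u)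
    (hv : IsSolU a b f v) : u = v := by
  suffices h : ∀ t n, u n t = v n t from funext fun n => funext fun t => h t n
  intro t
  induction t using Nat.strong_induction_on with
  | _ t ih =>
    intro n
    rcases Nat.eq_zero_or_pos n with rfl | hn
    · rw [hu.2.1, hv.2.1]
    cases t with
    | zero => rw [hu.1 n hn, hv.1 n hn]
    | succ t =>
      rw [hu.step hn, hv.step hn, ih t (by omega), ih t (by omega), ih t (by omega),
        ih (t - 1) (by omega)]

-- At `t = 0` the truncated `t - 1` reads `u_{n,0} = 0`, which is the convention `u_{n,-1} = 0`.
noncomputable def solution (a b f : ℕ → ℝ) : ℕ → ℕ → ℝ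
  | 0, t => f t
  | _ + 1, 0 => 0
  | n + 1, t + 1 => a (n + 1) * solution a b f (n + 2) t + a n * solution a b f n t
      + b (n + 1) * solution a b f (n + 1) t - solution a b f (n + 1) (t - 1)
termination_by _ t => t

theorem isSolU_solution (a b f : ℕ → ℝ) : IsSolU a b f (solution a b f) := by
  refine ⟨fun n hn => ?_, fun t => by cases t <;> simp [solution], fun n t hn => ?_⟩
  · obtain ⟨n, rfl⟩ := Nat.exists_eq_add_of_le' hn
    simp [solution]
  · obtain ⟨n, rfl⟩ := Nat.exists_eq_add_of_le' hn
    rw [solution]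
    simp only [Nat.add_sub_cancel]
    ring

noncomputable def impulseResponse (a b : ℕ → ℝ) : ℕ → ℕ → ℝ :=
  solution a b fun t => if t = 0 then 1 else 0

section impulseResponse

variable (a b : ℕ → ℝ)

theorem isSolU_impulseResponse :
    IsSolU a b (fun t => if t = 0 then 1 else 0) (impulseResponse a b) :=
  isSolU_solution _ _ _

theorem impulseResponse_zero_left (t : ℕ) :
    impulseResponse a b 0 t = if t = 0 then 1 else 0 :=
  (isSolU_impulseResponse a b).2.1 t

theorem impulseResponse_zero_right {n : ℕ} (hn : 1 ≤ n) : impulseResponse a b n 0 = 0 :=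
  (isSolU_impulseResponse a b).1 n hn

theorem impulseResponse_eq_zero_of_lt {n t : ℕ} (h : t < n) : impulseResponse a b n t = 0 := by
  induction t using Nat.strong_induction_on generalizing n with
  | _ t ih =>
    cases t with
    | zero => exact impulseResponse_zero_right a b h
    | succ t =>
      rw [(isSolU_impulseResponse a b).step (by omega), ih t (by omega) (by omega),
        ih t (by omega) (by omega), ih t (by omega) (by omega), ih (t - 1) (by omega) (by omega)]
      ring

theorem impulseResponse_self (n : ℕ) : impulseResponse a b n n = ∏ k ∈ range n, a k := by
  induction n with
  | zero => simp [impulseResponse_zero_left]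
  | succ n ih =>
    rw [(isSolU_impulseResponse a b).step (by omega), Nat.add_sub_cancel, ih,
      impulseResponse_eq_zero_of_lt a b (by omega), impulseResponse_eq_zero_of_lt a b (by omega),
      impulseResponse_eq_zero_of_lt a b (by omega), prod_range_succ]
    ring

theorem impulseResponse_succ_self {n : ℕ} (hn : 1 ≤ n) :
    impulseResponse a b n (n + 1) =
      b n * ∏ k ∈ range n, a k + a (n - 1) * impulseResponse a b (n - 1) (n - 1 + 1) := by
  rw [(isSolU_impulseResponse a b).step hn, Nat.sub_add_cancel hn, impulseResponse_self,
    impulseResponse_eq_zero_of_lt a b (lt_add_one n),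
    impulseResponse_eq_zero_of_lt a b (by omega : n - 1 < n)]
  ring

end impulseResponse

noncomputable def causalConv (g f : ℕ → ℝ) (t : ℕ) : ℝ :=
  ∑ j ∈ range (t + 1), g j * f (t - j)

section causalConv

variable {g : ℕ → ℝ} (f : ℕ → ℝ)

theorem causalConv_delta (t : ℕ) : causalConv (fun j => if j = 0 then 1 else 0) f t = f t := by
  simp [causalConv]

theorem causalConv_succ (hg : g 0 = 0) (t : ℕ) :
    causalConv g f (t + 1) = causalConv (fun j => g (j + 1)) f t := by
  simp [causalConv, sum_range_succ' _ (t + 1), hg]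

theorem causalConv_pred (hg : g 0 = 0) (t : ℕ) :
    causalConv (fun j => g (j - 1)) f t = causalConv g f (t - 1) := by
  cases t with
  | zero => simp [causalConv, hg]
  | succ t => simp [causalConv, sum_range_succ' _ (t + 1), hg]

theorem causalConv_eq_of_eq_zero_of_lt {n t : ℕ} (hg : ∀ j < n, g j = 0) (hnt : n ≤ t)
    (ht : 0 < t) :
    causalConv g f t = g n * f (t - n) + ∑ s ∈ Icc n (t - 1), g (s + 1) * f (t - s - 1) := by
  have hIcc : Icc n (t - 1) = Ico n t :=
    Icc_sub_one_right_eq_Ico_of_not_isMin (by simpa using ht.ne') n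
  rw [causalConv, ← sum_range_add_sum_Ico _ (by omega : n ≤ t + 1),
    sum_eq_zero fun j hj => by rw [hg j (mem_range.mp hj), zero_mul], zero_add,
    sum_eq_sum_Ico_succ_bot (by omega), ← sum_Ico_add' _ n t 1, hIcc]
  simp only [Nat.sub_add_eq]

end causalConv

theorem isSolU_causalConv_impulseResponse (a b f : ℕ → ℝ) :
    IsSolU a b f fun n => causalConv (impulseResponse a b n) f := by
  refine ⟨fun n hn => ?_, fun t => ?_, fun n t hn => ?_⟩
  · simp [causalConv, impulseResponse_zero_right a b hn]
  · beta_reduce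
    rw [show impulseResponse a b 0 = _ from funext (impulseResponse_zero_left a b)]
    exact causalConv_delta f t
  · have hG0 := impulseResponse_zero_right a b hn
    have hstep : (fun j => impulseResponse a b n (j + 1)) = fun j =>
        a n * impulseResponse a b (n + 1) j + a (n - 1) * impulseResponse a b (n - 1) j
          + b n * impulseResponse a b n j - impulseResponse a b n (j - 1) :=
      funext ((isSolU_impulseResponse a b).step hn)
    beta_reduce
    rw [causalConv_succ f hG0, hstep, ← causalConv_pred f hG0]
    simp only [causalConv, mul_sum, ← sum_add_distrib, ← sum_sub_distrib]
    refine sum_eq_zero fun j _ => ?_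
    ring

theorem solution_representation_general
    (a b : ℕ → ℝ) :
    ∃ w : ℕ → ℕ → ℝ,
      (∀ s, w 0 s = 0) ∧
      (∀ n, 1 ≤ n →
        w n n = b n * (∏ k ∈ Finset.range n, a k) + a (n - 1) * w (n - 1) (n - 1)) ∧
      (∀ (f : ℕ → ℝ) (u : ℕ → ℕ → ℝ), IsSolU a b f u →
        ∀ n t : ℕ, 1 ≤ n → n ≤ t →
          u n t = (∏ k ∈ Finset.range n, a k) * f (t - n)
            + ∑ s ∈ Finset.Icc n (t - 1), w n s * f (t - s - 1)) := by
  refine ⟨fun n s => impulseResponse a b n (s + 1), fun s => ?_,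
    fun n hn => impulseResponse_succ_self a b hn, fun f u hu n t hn hnt => ?_⟩
  · simp [impulseResponse_zero_left]
  · rw [hu.unique (isSolU_causalConv_impulseResponse a b f), ← impulseResponse_self a b n]
    exact causalConv_eq_of_eq_zero_of_lt f (fun j hj => impulseResponse_eq_zero_of_lt a b hj) hnt
      (by omega)

/-- Representation of the solution of the semi-infinite system:
`u^f_{n,t} = (∏_{k=0}^{n-1} a_k) f_{t-n} + ∑_{s=n}^{t-1} w_{n,s} f_{t-s-1}`
for `1 ≤ n ≤ t`, with a kernel `w` independent of the control, satisfying
`w_{0,s} = 0` and the diagonal relation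
`w_{n,n} = b_n ∏_{k=0}^{n-1} a_k + a_{n-1} w_{n-1,n-1}`. -/
theorem solution_representation
    (a b : ℕ → ℝ) (ha0 : a 0 = 1) (hapos : ∀ n, 1 ≤ n → 0 < a n) :
    ∃ w : ℕ → ℕ → ℝ,
      (∀ s, w 0 s = 0) ∧
      (∀ n, 1 ≤ n →
        w n n = b n * (∏ k ∈ Finset.range n, a k) + a (n - 1) * w (n - 1) (n - 1)) ∧
      (∀ (f : ℕ → ℝ) (u : ℕ → ℕ → ℝ), IsSolU a b f u →
        ∀ n t : ℕ, 1 ≤ n → n ≤ t →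
          u n t = (∏ k ∈ Finset.range n, a k) * f (t - n)
            + ∑ s ∈ Finset.Icc n (t - 1), w n s * f (t - s - 1)) :=
  solution_representation_general a b
end

section
/- Let a, b : ℕ → ℝ with a 0 = 1 and a n > 0 for n ≥ 1, and fix N ≥ 1. The response vectors of the semi-infinite and of the finite dynamical systems with the same coefficients a, b coincide up to time 2N−1: r_t = r^N_t for all 0 ≤ t ≤ 2N−1 (local dependence of the response on the coefficients, due to finite speed of wave propagation). -/
/-- `v` is the solution of the finite discrete-time dynamical system (on sites
`0,…,N+1`, with Dirichlet condition at `N+1`) with coefficients `a`, `b` and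
boundary control `g`. -/
def IsSolV (N : ℕ) (a b g : ℕ → ℝ) (v : ℕ → ℕ → ℝ) : Prop :=
  (∀ n, 1 ≤ n → n ≤ N + 1 → v n 0 = 0) ∧
  (∀ t, v 0 t = g t) ∧
  (∀ t, v (N + 1) t = 0) ∧
  (∀ n t, 1 ≤ n → n ≤ N →
    v n (t + 1) + v n (t - 1) - a n * v (n + 1) t - a (n - 1) * v (n - 1) t
      - b n * v n t = 0)

/-- The boundary control `δ = (1,0,0,…)`. -/
def deltaCtrl : ℕ → ℝ := fun t => if t = 0 then 1 else 0

variable {N : ℕ} {a b f : ℕ → ℝ} {u v : ℕ → ℕ → ℝ}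

theorem IsSolU.apply_succ (hu : IsSolU a b f u) {n : ℕ} (hn : 1 ≤ n) (t : ℕ) :
    u n (t + 1) = a n * u (n + 1) t + a (n - 1) * u (n - 1) t + b n * u n t - u n (t - 1) := by
  linarith [hu.2.2 n t hn]

theorem IsSolV.apply_succ (hv : IsSolV N a b f v) {n : ℕ} (hn : 1 ≤ n) (hnN : n ≤ N) (t : ℕ) :
    v n (t + 1) = a n * v (n + 1) t + a (n - 1) * v (n - 1) t + b n * v n t - v n (t - 1) := by
  linarith [hv.2.2.2 n t hn hnN]

theorem IsSolU.eq_zero_of_lt (hu : IsSolU a b f u) (t : ℕ) :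
    ∀ n, 1 ≤ n → t < n → u n t = 0 := by
  induction t using Nat.strong_induction_on with
  | _ t ih =>
    intro n hn hlt
    cases t with
    | zero => exact hu.1 n hn
    | succ t =>
      rw [hu.apply_succ hn, ih t (by omega) (n + 1) (by omega) (by omega),
        ih t (by omega) (n - 1) (by omega) (by omega), ih t (by omega) n hn (by omega),
        ih (t - 1) (by omega) n hn (by omega)]
      ring

theorem IsSolU.eq_of_isSolV (hu : IsSolU a b f u) (hv : IsSolV N a b f v) (t : ℕ) :
    ∀ n, n ≤ N + 1 → n + t ≤ 2 * N + 1 → u n t = v n t := by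
  induction t using Nat.strong_induction_on with
  | _ t ih =>
    intro n hnN hcone
    obtain rfl | hn := Nat.eq_zero_or_pos n
    · rw [hu.2.1, hv.2.1]
    obtain rfl | hnN := eq_or_lt_of_le hnN
    · rw [hv.2.2.1, hu.eq_zero_of_lt t (N + 1) hn (by omega)]
    cases t with
    | zero => rw [hu.1 n hn, hv.1 n hn hnN.le]
    | succ t =>
      rw [hu.apply_succ hn, hv.apply_succ hn (by omega),
        ih t (by omega) (n + 1) (by omega) (by omega), ih t (by omega) (n - 1) (by omega) (by omega),
        ih t (by omega) n (by omega) (by omega), ih (t - 1) (by omega) n (by omega) (by omega)]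

theorem response_vectors_coincide_general
    (a b : ℕ → ℝ)
    (N : ℕ) (hN : 1 ≤ N)
    (u v : ℕ → ℕ → ℝ)
    (hu : IsSolU a b deltaCtrl u) (hv : IsSolV N a b deltaCtrl v) :
    ∀ t : ℕ, t ≤ 2 * N - 1 → u 1 (t + 1) = v 1 (t + 1) := by
  intro t ht
  exact hu.eq_of_isSolV hv (t + 1) 1 (by omega) (by omega)

/-- Local dependence of the response on the coefficients: the response vectors
`r_t = u^δ_{1,t+1}` and `r^N_t = v^δ_{1,t+1}` of the semi-infinite and finite
systems with the same coefficients coincide for `0 ≤ t ≤ 2N - 1`. -/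
theorem response_vectors_coincide
    (a b : ℕ → ℝ) (ha0 : a 0 = 1) (hapos : ∀ n, 1 ≤ n → 0 < a n)
    (N : ℕ) (hN : 1 ≤ N)
    (u v : ℕ → ℕ → ℝ)
    (hu : IsSolU a b deltaCtrl u) (hv : IsSolV N a b deltaCtrl v) :
    ∀ t : ℕ, t ≤ 2 * N - 1 → u 1 (t + 1) = v 1 (t + 1) :=
  response_vectors_coincide_general a b N hN u v hu hv
end

section
/- Let B ≥ 1 and let a, b : ℕ → ℝ satisfy a 0 = 1, a n > 0 and max(a n, |b n|) ≤ B for all n ≥ 1. Let z ∈ ℂ with 0 < |z| < 1/(3B+1) and set λ := z + 1/z. Then for every n ≥ 0 the series û_n := −∑_{t=0}^∞ z^t u^δ_{n,t} converges absolutely, û_0 = −1, and û satisfies the Jacobi difference equation a_{n−1} û_{n−1} + b_n û_n + a_n û_{n+1} = λ û_n for all n ≥ 1. -/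
/-! With `C = 3B + 1`, the recursion bounds `|u_{n,t+1}|` by `3B C^t + C^(t-1) ≤ C^(t+1)`, so the
series converge absolutely for `|z| C < 1`. Multiplying the recursion by `z^t` and summing over `t`,
the time shifts `t ± 1` become multiplication by `z^(∓1)` (no boundary terms survive because
`u_{n,0} = 0` for `n ≥ 1`), which is the Jacobi equation with `λ = z + 1/z`; and `û_0 = -1`
because `u_{0,·} = δ`. -/

section Shift

variable {𝕜 : Type*} [Field 𝕜] [TopologicalSpace 𝕜] [IsTopologicalRing 𝕜]
  {z : 𝕜} {v : ℕ → 𝕜}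

lemma summable_pow_mul_succ (hz : z ≠ 0) (hv : Summable fun t => z ^ t * v t) :
    Summable fun t => z ^ t * v (t + 1) :=
  (((summable_nat_add_iff 1).mpr hv).mul_left z⁻¹).congr fun t => by
    rw [pow_succ, ← mul_assoc, mul_comm _ z, ← mul_assoc, inv_mul_cancel₀ hz, one_mul]

lemma summable_pow_mul_pred (hv : Summable fun t => z ^ t * v t) :
    Summable fun t => z ^ t * v (t - 1) :=
  (summable_nat_add_iff 1).mp <| (hv.mul_left z).congr fun t => by
    rw [Nat.add_sub_cancel, pow_succ]; ring

lemma tsum_pow_mul_succ [T2Space 𝕜] (hz : z ≠ 0) (hv0 : v 0 = 0)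
    (hv : Summable fun t => z ^ t * v t) :
    ∑' t, z ^ t * v (t + 1) = z⁻¹ * ∑' t, z ^ t * v t := by
  rw [hv.tsum_eq_zero_add, hv0, mul_zero, zero_add, ← tsum_mul_left]
  refine tsum_congr fun t => ?_
  rw [pow_succ, ← mul_assoc, mul_comm _ z, ← mul_assoc, inv_mul_cancel₀ hz, one_mul]

lemma tsum_pow_mul_pred [T2Space 𝕜] (hv0 : v 0 = 0) (hv : Summable fun t => z ^ t * v t) :
    ∑' t, z ^ t * v (t - 1) = z * ∑' t, z ^ t * v t := by
  -- the `t = 0` term is `v (0 - 1) = v 0`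
  rw [(summable_pow_mul_pred hv).tsum_eq_zero_add, Nat.zero_sub, hv0, mul_zero, zero_add,
    ← tsum_mul_left]
  refine tsum_congr fun t => ?_
  rw [Nat.add_sub_cancel, pow_succ]; ring

lemma tsum_pow_mul_succ_add_pred [T2Space 𝕜] (hz : z ≠ 0) (hv0 : v 0 = 0)
    (hv : Summable fun t => z ^ t * v t) :
    ∑' t, z ^ t * (v (t + 1) + v (t - 1)) = (z + z⁻¹) * ∑' t, z ^ t * v t := by
  simp only [mul_add]
  rw [(summable_pow_mul_succ hz hv).tsum_add (summable_pow_mul_pred hv),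
    tsum_pow_mul_succ hz hv0 hv, tsum_pow_mul_pred hv0 hv]
  ring

end Shift

lemma abs_le_pow_of_isSolU {B : ℝ} {a b f : ℕ → ℝ} {u : ℕ → ℕ → ℝ} (hu : IsSolU a b f u)
    (ha : ∀ n, |a n| ≤ B) (hb : ∀ n, 1 ≤ n → |b n| ≤ B) (hf : ∀ t, |f t| ≤ (3 * B + 1) ^ t) :
    ∀ t n, |u n t| ≤ (3 * B + 1) ^ t := by
  obtain ⟨hu_init, hu_bdry, hu_rec⟩ := hu
  have hC : 1 ≤ 3 * B + 1 := by linarith [(abs_nonneg _).trans (ha 0)]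
  intro t
  induction t using Nat.strong_induction_on with
  | _ t ih =>
    rintro (_ | n)
    · exact hu_bdry t ▸ hf t
    rcases t with _ | t
    · simp [hu_init (n + 1) n.succ_pos]
    have hstep : u (n + 1) (t + 1)
        = a (n + 1) * u (n + 2) t + a n * u n t + b (n + 1) * u (n + 1) t - u (n + 1) (t - 1) := by
      have h := hu_rec (n + 1) t n.succ_pos
      rw [Nat.add_sub_cancel] at h
      linarith
    have hprev : |u (n + 1) (t - 1)| ≤ (3 * B + 1) ^ t :=
      (ih (t - 1) (by omega) _).trans (pow_le_pow_right₀ hC (by omega))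
    have hterm : ∀ c k, |c| ≤ B → |c * u k t| ≤ B * (3 * B + 1) ^ t := fun c k hc => by
      rw [abs_mul]; exact mul_le_mul hc (ih t t.lt_succ_self k) (abs_nonneg _) (by linarith)
    calc |u (n + 1) (t + 1)|
        ≤ |a (n + 1) * u (n + 2) t| + |a n * u n t| + |b (n + 1) * u (n + 1) t|
          + |u (n + 1) (t - 1)| := by
          rw [hstep]; exact (abs_sub _ _).trans (add_le_add_left (abs_add_three _ _ _) _)
      _ ≤ 3 * (B * (3 * B + 1) ^ t) + (3 * B + 1) ^ t := by
          linarith [hterm (a (n + 1)) (n + 2) (ha _), hterm (a n) n (ha _),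
            hterm (b (n + 1)) (n + 1) (hb _ n.succ_pos)]
      _ = (3 * B + 1) ^ (t + 1) := by ring

lemma summable_norm_pow_mul_of_abs_le_pow {z : ℂ} {C : ℝ} {v : ℕ → ℝ}
    (hv : ∀ t, |v t| ≤ C ^ t) (hzC : ‖z‖ * C < 1) :
    Summable fun t => ‖z ^ t * (v t : ℂ)‖ := by
  have hC : 0 ≤ C := (abs_nonneg _).trans (by simpa using hv 1)
  refine .of_nonneg_of_le (fun t => norm_nonneg _) (fun t => ?_)
    (summable_geometric_of_lt_one (by positivity) hzC)
  rw [norm_mul, norm_pow, Complex.norm_real, Real.norm_eq_abs, mul_pow]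
  exact mul_le_mul_of_nonneg_left (hv t) (by positivity)

lemma abs_deltaCtrl_le_pow {C : ℝ} (hC : 1 ≤ C) (t : ℕ) : |deltaCtrl t| ≤ C ^ t := by
  unfold deltaCtrl
  split_ifs with ht
  · simp [ht]
  · simpa using pow_nonneg (zero_le_one.trans hC) t

lemma tsum_pow_mul_deltaCtrl (z : ℂ) : ∑' t, z ^ t * (deltaCtrl t : ℂ) = 1 := by
  rw [tsum_eq_single 0 fun t ht => by simp [deltaCtrl, ht]]
  simp [deltaCtrl]

lemma jacobi_tsum_of_isSolU {a b f : ℕ → ℝ} {u : ℕ → ℕ → ℝ} (hu : IsSolU a b f u) {z : ℂ}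
    (hz : z ≠ 0) (hsum : ∀ n, Summable fun t => z ^ t * (u n t : ℂ)) {n : ℕ} (hn : 1 ≤ n) :
    (a (n - 1) : ℂ) * ∑' t, z ^ t * (u (n - 1) t : ℂ) + (b n : ℂ) * ∑' t, z ^ t * (u n t : ℂ)
      + (a n : ℂ) * ∑' t, z ^ t * (u (n + 1) t : ℂ)
      = (z + z⁻¹) * ∑' t, z ^ t * (u n t : ℂ) := by
  obtain ⟨hu_init, -, hu_rec⟩ := hu
  have hrec : ∀ t, z ^ t * ((u n (t + 1) : ℂ) + (u n (t - 1) : ℂ))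
      = (a (n - 1) : ℂ) * (z ^ t * u (n - 1) t) + (b n : ℂ) * (z ^ t * u n t)
        + (a n : ℂ) * (z ^ t * u (n + 1) t) := fun t => by
    have h : u n (t + 1) + u n (t - 1)
        = a (n - 1) * u (n - 1) t + b n * u n t + a n * u (n + 1) t := by
      linarith [hu_rec n t hn]
    rw [← Complex.ofReal_add, h]; push_cast; ring
  rw [← tsum_pow_mul_succ_add_pred hz (by simp [hu_init n hn]) (hsum n), tsum_congr hrec,
    (((hsum _).mul_left _).add ((hsum _).mul_left _)).tsum_add ((hsum _).mul_left _),
    (((hsum _).mul_left _)).tsum_add ((hsum _).mul_left _), tsum_mul_left, tsum_mul_left,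
    tsum_mul_left]

/-- For `0 < |z| < 1/(3B+1)` and `λ = z + 1/z`, the generating function
`û_n = -∑_{t=0}^∞ z^t u^δ_{n,t}` converges absolutely, satisfies `û_0 = -1`
and the Jacobi difference equation
`a_{n-1} û_{n-1} + b_n û_n + a_n û_{n+1} = λ û_n` for `n ≥ 1`. -/
theorem generating_function_semiinfinite
    (B : ℝ) (hB : 1 ≤ B) (a b : ℕ → ℝ) (ha0 : a 0 = 1)
    (hapos : ∀ n, 1 ≤ n → 0 < a n)
    (hbound : ∀ n, 1 ≤ n → max (a n) |b n| ≤ B)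
    (u : ℕ → ℕ → ℝ) (hu : IsSolU a b deltaCtrl u)
    (z : ℂ) (hz0 : 0 < ‖z‖) (hz : ‖z‖ < 1 / (3 * B + 1)) :
    (∀ n : ℕ, Summable (fun t : ℕ => ‖z ^ t * (u n t : ℂ)‖)) ∧
    (-∑' t : ℕ, z ^ t * (u 0 t : ℂ)) = -1 ∧
    (∀ n : ℕ, 1 ≤ n →
      (a (n - 1) : ℂ) * (-∑' t : ℕ, z ^ t * (u (n - 1) t : ℂ))
        + (b n : ℂ) * (-∑' t : ℕ, z ^ t * (u n t : ℂ))
        + (a n : ℂ) * (-∑' t : ℕ, z ^ t * (u (n + 1) t : ℂ))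
      = (z + 1 / z) * (-∑' t : ℕ, z ^ t * (u n t : ℂ))) := by
  have ha : ∀ n, |a n| ≤ B
    | 0 => by simpa [ha0] using hB
    | n + 1 => (abs_of_pos (hapos _ n.succ_pos)).trans_le
        ((le_max_left _ _).trans (hbound _ n.succ_pos))
  have hb : ∀ n, 1 ≤ n → |b n| ≤ B := fun n hn => (le_max_right _ _).trans (hbound n hn)
  have hgrowth := abs_le_pow_of_isSolU hu ha hb (abs_deltaCtrl_le_pow (by linarith))
  have hzC : ‖z‖ * (3 * B + 1) < 1 := (lt_div_iff₀ (by linarith)).mp hz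
  have hsum n := summable_norm_pow_mul_of_abs_le_pow (fun t => hgrowth t n) hzC
  refine ⟨hsum, ?_, fun n hn => ?_⟩
  · simp only [hu.2.1, tsum_pow_mul_deltaCtrl]
  · have h := jacobi_tsum_of_isSolU hu (norm_pos_iff.mp hz0) (fun n => (hsum n).of_norm) hn
    rw [one_div]
    linear_combination -h
end

section
/- For every λ ∈ ℂ with Im λ > 0, the quadratic polynomial z² − λz + 1 has exactly one root z₀ with |z₀| < 1 (its other root has modulus > 1), and this root satisfies Im z₀ < 0. -/
/-!
Multiplying `λz = z² + 1` by `z̄` and taking imaginary parts gives, for every root `z`,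
`Im λ · |z|² = Im z · (|z|² - 1)`. With `Im λ > 0` this rules out `|z| = 1` and forces
`Im z < 0` when `|z| < 1`. Since the two roots multiply to `1`, exactly one of them lies in
the open unit disc.
-/

section CommRing

variable {K : Type*} [CommRing K] {lam z w : K}

theorem sq_sub_mul_add_one_eq_zero_sub (hz : z ^ 2 - lam * z + 1 = 0) :
    (lam - z) ^ 2 - lam * (lam - z) + 1 = 0 := by
  linear_combination hz

theorem mul_sub_eq_one_of_sq_sub_mul_add_one_eq_zero (hz : z ^ 2 - lam * z + 1 = 0) :
    z * (lam - z) = 1 := by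
  linear_combination -hz

theorem mul_eq_one_of_sq_sub_mul_add_one_eq_zero [NoZeroDivisors K]
    (hz : z ^ 2 - lam * z + 1 = 0) (hw : w ^ 2 - lam * w + 1 = 0) (hne : w ≠ z) :
    w * z = 1 := by
  have hfac : (w - z) * (w - (lam - z)) = 0 := by linear_combination hw - hz
  have hw_eq : w = lam - z :=
    sub_eq_zero.mp ((mul_eq_zero.mp hfac).resolve_left (sub_ne_zero.mpr hne))
  rw [hw_eq, mul_comm]
  exact mul_sub_eq_one_of_sq_sub_mul_add_one_eq_zero hz

end CommRing

open Polynomial in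
theorem exists_sq_sub_mul_add_one_eq_zero {K : Type*} [Field K] [IsAlgClosed K] (lam : K) :
    ∃ z : K, z ^ 2 - lam * z + 1 = 0 := by
  have hdeg : (X ^ 2 - C lam * X + 1 : K[X]).degree = 2 := by compute_degree!
  obtain ⟨z, hz⟩ := IsAlgClosed.exists_root _ (hdeg.trans_ne two_ne_zero)
  exact ⟨z, by simpa using hz⟩

namespace Complex

open ComplexConjugate

variable {lam z : ℂ}

theorem im_mul_normSq_of_sq_sub_mul_add_one_eq_zero (hz : z ^ 2 - lam * z + 1 = 0) :
    lam.im * normSq z = z.im * (normSq z - 1) := by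
  have h : lam * (normSq z : ℂ) = z * normSq z + conj z := by
    rw [← mul_conj]
    linear_combination (-conj z) * hz
  have him := congrArg im h
  simp only [im_mul_ofReal, add_im, conj_im] at him
  linear_combination him

theorem norm_ne_one_of_sq_sub_mul_add_one_eq_zero (hlam : 0 < lam.im)
    (hz : z ^ 2 - lam * z + 1 = 0) : ‖z‖ ≠ 1 := by
  intro h
  have hn : normSq z = 1 := by rw [← Complex.sq_norm, h, one_pow]
  have := im_mul_normSq_of_sq_sub_mul_add_one_eq_zero hz
  rw [hn, sub_self, mul_zero, mul_one] at this
  exact hlam.ne' this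

theorem im_neg_of_sq_sub_mul_add_one_eq_zero (hlam : 0 < lam.im)
    (hz : z ^ 2 - lam * z + 1 = 0) (hz1 : ‖z‖ < 1) : z.im < 0 := by
  have hz0 : z ≠ 0 := by
    rintro rfl
    norm_num at hz
  have hn_pos : 0 < normSq z := normSq_pos.mpr hz0
  have hn_lt : normSq z < 1 := by
    rw [← Complex.sq_norm]
    exact pow_lt_one₀ (norm_nonneg z) hz1 two_ne_zero
  have key := im_mul_normSq_of_sq_sub_mul_add_one_eq_zero hz
  nlinarith [mul_pos hlam hn_pos]

theorem exists_sq_sub_mul_add_one_eq_zero_norm_lt_one (hlam : 0 < lam.im) :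
    ∃ z : ℂ, z ^ 2 - lam * z + 1 = 0 ∧ ‖z‖ < 1 := by
  obtain ⟨z, hz⟩ := exists_sq_sub_mul_add_one_eq_zero lam
  rcases (norm_ne_one_of_sq_sub_mul_add_one_eq_zero hlam hz).lt_or_gt with hlt | hgt
  · exact ⟨z, hz, hlt⟩
  · refine ⟨lam - z, sq_sub_mul_add_one_eq_zero_sub hz, ?_⟩
    have hprod : ‖z‖ * ‖lam - z‖ = 1 := by
      rw [← norm_mul, mul_sub_eq_one_of_sq_sub_mul_add_one_eq_zero hz, norm_one]
    nlinarith [norm_nonneg (lam - z)]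

end Complex

/-- For `Im λ > 0` the quadratic `z² - λz + 1` has exactly one root `z₀` with
`|z₀| < 1` (every other root has modulus `> 1`), and this root has `Im z₀ < 0`. -/
theorem quadratic_root_in_disc (lam : ℂ) (hlam : 0 < lam.im) :
    ∃ z₀ : ℂ,
      (z₀ ^ 2 - lam * z₀ + 1 = 0 ∧ ‖z₀‖ < 1 ∧ z₀.im < 0) ∧
      (∀ z : ℂ, z ^ 2 - lam * z + 1 = 0 → z ≠ z₀ → 1 < ‖z‖) := by
  obtain ⟨z₀, hz₀, hnorm⟩ := Complex.exists_sq_sub_mul_add_one_eq_zero_norm_lt_one hlam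
  refine ⟨z₀, ⟨hz₀, hnorm, Complex.im_neg_of_sq_sub_mul_add_one_eq_zero hlam hz₀ hnorm⟩, ?_⟩
  intro z hz hne
  have hprod : ‖z‖ * ‖z₀‖ = 1 := by
    rw [← norm_mul, mul_eq_one_of_sq_sub_mul_add_one_eq_zero hz₀ hz hne, norm_one]
  nlinarith [norm_nonneg z, norm_nonneg z₀]
end

section
/- Let λ ∈ ℂ with Im λ > 0 and let z(λ) be the unique root of z² − λz + 1 = 0 with |z| < 1. Then for every N ≥ 0 the Chebyshev polynomial of the second kind satisfies U_N(λ/2) ≠ 0, and the ratio of consecutive Chebyshev polynomials converges: U_{N−1}(λ/2)/U_N(λ/2) → z(λ) as N → ∞. -/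
/-!
Writing `2x = z + z⁻¹`, the recurrence of `U` gives `U_n(x) · zⁿ (1 - z²) = 1 - z^(2n+2)`.
For `‖z‖ < 1` the right-hand side never vanishes, so neither does `U_n(x)`, and the ratio
`U_n(x) / U_{n+1}(x) = z (1 - z^(2n+2)) / (1 - z^(2n+4))` tends to `z`.
-/

open Filter Polynomial

theorem pow_ne_one_of_norm_lt_one {R : Type*} [SeminormedRing R] [NormOneClass R] {z : R}
    (hz : ‖z‖ < 1) {k : ℕ} (hk : k ≠ 0) : z ^ k ≠ 1 := by
  intro h
  have hle := norm_pow_le' z (Nat.pos_of_ne_zero hk)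
  rw [h, norm_one] at hle
  exact (pow_lt_one₀ (norm_nonneg z) hz hk).not_ge hle

namespace Polynomial.Chebyshev

theorem eval_U_mul_pow_mul_one_sub_sq {R : Type*} [CommRing R] {x z : R}
    (hz : z ^ 2 + 1 = 2 * x * z) (n : ℕ) :
    (U R n).eval x * z ^ n * (1 - z ^ 2) = 1 - z ^ (2 * n + 2) := by
  induction n using Nat.twoStepInduction with
  | zero => simp
  | one =>
    simp only [Nat.cast_one, U_one, eval_mul, eval_ofNat, eval_X]
    linear_combination -(1 - z ^ 2) * hz
  | more n ih₀ ih₁ =>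
    have hidx : ((n + 2 : ℕ) : ℤ) = (n : ℤ) + 2 := by push_cast; ring
    rw [hidx, U_add_two]
    push_cast at ih₁ ⊢
    simp only [eval_sub, eval_mul, eval_ofNat, eval_X]
    linear_combination z * ih₁ * 2 * x - z ^ 2 * ih₀ - (1 - z ^ (2 * n + 4)) * hz

section NormedField

variable {K : Type*} [NormedField K] {x z : K}

theorem eval_U_ne_zero_of_norm_lt_one (hz : z ^ 2 + 1 = 2 * x * z) (hz₁ : ‖z‖ < 1) (n : ℕ) :
    (U K n).eval x ≠ 0 := by
  intro hU
  have h := eval_U_mul_pow_mul_one_sub_sq hz n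
  rw [hU, zero_mul, zero_mul, eq_comm, sub_eq_zero, eq_comm] at h
  exact pow_ne_one_of_norm_lt_one hz₁ (by omega) h

theorem eval_U_div_eval_U_succ (hz : z ^ 2 + 1 = 2 * x * z) (hz₁ : ‖z‖ < 1) (n : ℕ) :
    (U K n).eval x / (U K (n + 1 : ℕ)).eval x =
      z * (1 - z ^ (2 * n + 2)) / (1 - z ^ (2 * n + 4)) := by
  have hz₀ : z ≠ 0 := by rintro rfl; simp at hz
  have hsq : 1 - z ^ 2 ≠ 0 := sub_ne_zero.2 (pow_ne_one_of_norm_lt_one hz₁ two_ne_zero).symm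
  have hden : 1 - z ^ (2 * n + 4) ≠ 0 :=
    sub_ne_zero.2 (pow_ne_one_of_norm_lt_one hz₁ (by omega)).symm
  rw [div_eq_div_iff (eval_U_ne_zero_of_norm_lt_one hz hz₁ (n + 1)) hden]
  refine mul_left_cancel₀ (mul_ne_zero (pow_ne_zero (n + 1) hz₀) hsq) ?_
  linear_combination z * (1 - z ^ (2 * n + 4)) * eval_U_mul_pow_mul_one_sub_sq hz n -
    z * (1 - z ^ (2 * n + 2)) * eval_U_mul_pow_mul_one_sub_sq hz (n + 1)

theorem tendsto_eval_U_sub_one_div_eval_U (hz : z ^ 2 + 1 = 2 * x * z) (hz₁ : ‖z‖ < 1) :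
    Tendsto (fun N : ℕ => (U K ((N : ℤ) - 1)).eval x / (U K N).eval x) atTop (nhds z) := by
  rw [← tendsto_add_atTop_iff_nat 1]
  have hpow : Tendsto (z ^ ·) atTop (nhds 0) := tendsto_pow_atTop_nhds_zero_of_norm_lt_one hz₁
  have h₂ := hpow.comp (tendsto_atTop_mono (fun n => by omega : ∀ n, n ≤ 2 * n + 2) tendsto_id)
  have h₄ := hpow.comp (tendsto_atTop_mono (fun n => by omega : ∀ n, n ≤ 2 * n + 4) tendsto_id)
  have hlim : Tendsto (fun n : ℕ => z * (1 - z ^ (2 * n + 2)) / (1 - z ^ (2 * n + 4))) atTop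
      (nhds (z * (1 - 0) / (1 - 0))) :=
    (tendsto_const_nhds.mul (tendsto_const_nhds.sub h₂)).div (tendsto_const_nhds.sub h₄) (by simp)
  rw [sub_zero, mul_one, div_one] at hlim
  refine hlim.congr fun n => ?_
  have hidx : ((n + 1 : ℕ) : ℤ) - 1 = n := by push_cast; ring
  rw [hidx]
  exact (eval_U_div_eval_U_succ hz hz₁ n).symm

end NormedField

end Polynomial.Chebyshev

theorem chebyshev_ratio_tendsto_root_general
    (lam : ℂ)
    (z : ℂ) (hroot : z ^ 2 - lam * z + 1 = 0) (hz : ‖z‖ < 1) :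
    (∀ N : ℕ, Polynomial.eval (lam / 2) (Polynomial.Chebyshev.U ℂ (N : ℤ)) ≠ 0) ∧
    Tendsto (fun N : ℕ =>
        Polynomial.eval (lam / 2) (Polynomial.Chebyshev.U ℂ ((N : ℤ) - 1)) /
          Polynomial.eval (lam / 2) (Polynomial.Chebyshev.U ℂ (N : ℤ)))
      atTop (nhds z) := by
  have hz' : z ^ 2 + 1 = 2 * (lam / 2) * z := by linear_combination hroot
  exact ⟨Chebyshev.eval_U_ne_zero_of_norm_lt_one hz' hz,
    Chebyshev.tendsto_eval_U_sub_one_div_eval_U hz' hz⟩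

/-- For `Im λ > 0`, the Chebyshev polynomials of the second kind satisfy
`U_N(λ/2) ≠ 0` for all `N ≥ 0`, and `U_{N-1}(λ/2)/U_N(λ/2) → z(λ)` as
`N → ∞`, where `z(λ)` is the root of `z² - λz + 1 = 0` with `|z| < 1`. -/
theorem chebyshev_ratio_tendsto_root
    (lam : ℂ) (hlam : 0 < lam.im)
    (z : ℂ) (hroot : z ^ 2 - lam * z + 1 = 0) (hz : ‖z‖ < 1) :
    (∀ N : ℕ, Polynomial.eval (lam / 2) (Polynomial.Chebyshev.U ℂ (N : ℤ)) ≠ 0) ∧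
    Tendsto (fun N : ℕ =>
        Polynomial.eval (lam / 2) (Polynomial.Chebyshev.U ℂ ((N : ℤ) - 1)) /
          Polynomial.eval (lam / 2) (Polynomial.Chebyshev.U ℂ (N : ℤ)))
      atTop (nhds z) :=
  chebyshev_ratio_tendsto_root_general lam z hroot hz
end

section
/- For every λ ∈ ℂ with Im λ > 0, the Stieltjes transform of the semicircle-type measure dρ(x) = (2π)⁻¹√(4 − x²) dx on (−2, 2) equals minus the root z(λ): (1/(2π)) ∫_{−2}^{2} √(4 − x²)/(x − λ) dx = −z(λ). -/
/-!
Substituting `x = w + w⁻¹` with `w` on the upper unit semicircle turns the integrand into a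
rational function of `w` with an explicit primitive `semicirclePrimitive z`. Because
`λ = z + z⁻¹` with `‖z‖ < 1` and `Im λ > 0` forces `Im z < 0`, the points `w - z`, `1 - z w` and
`-i w` stay in the slit plane along the closed semicircle, so the logarithms in the primitive are
continuous up to the endpoints, and the fundamental theorem of calculus gives the integral as
`semicirclePrimitive z 1 - semicirclePrimitive z (-1) = -2πz`.
-/

open Complex Set

theorem im_add_inv_pos_iff {z : ℂ} (hz : ‖z‖ < 1) : 0 < (z + z⁻¹).im ↔ z.im < 0 := by
  rcases eq_or_ne z 0 with rfl | hz0
  · simp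
  have hn : 0 < normSq z := normSq_pos.2 hz0
  have hn1 : normSq z < 1 := by
    rw [normSq_eq_norm_sq]
    nlinarith [norm_nonneg z]
  have hneg : 1 - (normSq z)⁻¹ < 0 := sub_neg.2 (one_lt_inv_iff₀.2 ⟨hn, hn1⟩)
  have him : (z + z⁻¹).im = z.im * (1 - (normSq z)⁻¹) := by
    rw [add_im, inv_im]; ring
  rw [him]
  constructor <;> intro h <;> nlinarith

theorem log_neg_eq_log_add_pi_mul_I {u : ℂ} (hu : u.im < 0) :
    log (-u) = log u + Real.pi * I := by
  simp only [log, norm_neg, arg_neg_eq_arg_add_pi_of_im_neg hu]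
  push_cast; ring

theorem neg_I_mul_mem_slitPlane {w : ℂ} (hw0 : w ≠ 0) (hw : 0 ≤ w.im) : -I * w ∈ slitPlane := by
  rcases hw.lt_or_eq with hw | hw
  · exact mem_slitPlane_iff.2 (Or.inl (by simpa using hw))
  · have : w.re ≠ 0 := fun h => hw0 (Complex.ext h hw.symm)
    exact mem_slitPlane_iff.2 (Or.inr (by simpa using this))

noncomputable def semicirclePrimitive (z w : ℂ) : ℂ :=
  -I * (w - w⁻¹) - I * (z + z⁻¹) * log (-I * w) - I * (z - z⁻¹) * (log (w - z) - log (1 - z * w))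

noncomputable def semicirclePrimitiveDeriv (z w : ℂ) : ℂ :=
  -I * (1 + (w ^ 2)⁻¹) - I * (z + z⁻¹) * w⁻¹ - I * (z - z⁻¹) * ((w - z)⁻¹ + z * (1 - z * w)⁻¹)

section semicirclePrimitive

variable {z w : ℂ}

theorem hasDerivAt_semicirclePrimitive (hrot : -I * w ∈ slitPlane) (hsub : w - z ∈ slitPlane)
    (hone : 1 - z * w ∈ slitPlane) :
    HasDerivAt (semicirclePrimitive z) (semicirclePrimitiveDeriv z w) w := by
  have hw0 : w ≠ 0 := by rintro rfl; simp at hrot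
  have hid := hasDerivAt_id' w
  have h₁ := (hid.fun_sub (hasDerivAt_inv hw0)).const_mul (-I)
  have h₂ := ((hid.const_mul (-I)).clog hrot).const_mul (I * (z + z⁻¹))
  have h₃ := (((hid.sub_const z).clog hsub).fun_sub
    (((hid.const_mul z).const_sub 1).clog hone)).const_mul (I * (z - z⁻¹))
  refine ((h₁.fun_sub h₂).fun_sub h₃).congr_deriv ?_
  simp only [semicirclePrimitiveDeriv]
  field_simp
  ring

theorem semicirclePrimitiveDeriv_mul_eq (hz : z ≠ 0) (hw : w ≠ 0) (hwz : w - z ≠ 0)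
    (hzw : 1 - z * w ≠ 0) (hw1 : w - w⁻¹ ≠ 0) :
    semicirclePrimitiveDeriv z w * (w / (w - w⁻¹)) =
      -I * (w - w⁻¹) / (w + w⁻¹ - (z + z⁻¹)) := by
  have hfac : w + w⁻¹ - (z + z⁻¹) = -(w - z) * (1 - z * w) / (z * w) := by
    field_simp; ring
  have hw2 : w ^ 2 - 1 ≠ 0 := by
    contrapose! hw1; field_simp; linear_combination hw1
  have hwz' : 1 - w * z ≠ 0 := by rwa [mul_comm]
  rw [hfac, semicirclePrimitiveDeriv]
  field_simp
  ring

theorem semicirclePrimitive_one_sub_neg_one (hz : z.im < 0) :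
    semicirclePrimitive z 1 - semicirclePrimitive z (-1) = -2 * Real.pi * z := by
  have hlog : log (-1 - z) = log (1 + z) + Real.pi * I := by
    rw [← log_neg_eq_log_add_pi_mul_I (by simpa using hz), neg_add']
  simp only [semicirclePrimitive, mul_one, mul_neg, neg_neg, log_I, log_neg_I, sub_neg_eq_add,
    hlog]
  ring_nf
  rw [I_sq]
  ring

end semicirclePrimitive

noncomputable def joukowskyUpperInv (x : ℝ) : ℂ := (x + I * Real.sqrt (4 - x ^ 2)) / 2

section joukowskyUpperInv

variable {x : ℝ}

theorem joukowskyUpperInv_im_nonneg (x : ℝ) : 0 ≤ (joukowskyUpperInv x).im := by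
  simp only [joukowskyUpperInv, div_ofNat_im, add_im, ofReal_im, mul_im, I_re, mul_zero, I_im,
    ofReal_re, one_mul, zero_add]
  positivity

theorem joukowskyUpperInv_mul_conj (hx : x ∈ Icc (-2) 2) :
    joukowskyUpperInv x * ((x - I * Real.sqrt (4 - x ^ 2)) / 2) = 1 := by
  have hs : (Real.sqrt (4 - x ^ 2) : ℂ) ^ 2 = 4 - x ^ 2 := by
    norm_cast; exact Real.sq_sqrt (by nlinarith [hx.1, hx.2])
  rw [joukowskyUpperInv]
  linear_combination (1 / 4 : ℂ) * hs - (Real.sqrt (4 - x ^ 2) : ℂ) ^ 2 / 4 * I_sq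

theorem joukowskyUpperInv_ne_zero (hx : x ∈ Icc (-2) 2) : joukowskyUpperInv x ≠ 0 :=
  left_ne_zero_of_mul_eq_one (joukowskyUpperInv_mul_conj hx)

theorem norm_joukowskyUpperInv (hx : x ∈ Icc (-2) 2) : ‖joukowskyUpperInv x‖ = 1 := by
  have hs := Real.sq_sqrt (show 0 ≤ 4 - x ^ 2 by nlinarith [hx.1, hx.2])
  rw [norm_def, normSq_apply, Real.sqrt_eq_one]
  simp only [joukowskyUpperInv, div_ofNat_re, add_re, ofReal_re, mul_re, I_re, zero_mul, I_im,
    ofReal_im, mul_zero, sub_self, add_zero, div_ofNat_im, add_im, mul_im, one_mul, zero_add]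
  linear_combination hs / 4

theorem joukowskyUpperInv_add_inv (hx : x ∈ Icc (-2) 2) :
    joukowskyUpperInv x + (joukowskyUpperInv x)⁻¹ = x := by
  rw [inv_eq_of_mul_eq_one_right (joukowskyUpperInv_mul_conj hx), joukowskyUpperInv]; ring

theorem joukowskyUpperInv_sub_inv (hx : x ∈ Icc (-2) 2) :
    joukowskyUpperInv x - (joukowskyUpperInv x)⁻¹ = I * Real.sqrt (4 - x ^ 2) := by
  rw [inv_eq_of_mul_eq_one_right (joukowskyUpperInv_mul_conj hx), joukowskyUpperInv]; ring

theorem hasDerivAt_joukowskyUpperInv (hx : x ∈ Ioo (-2) 2) :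
    HasDerivAt joukowskyUpperInv (-I * joukowskyUpperInv x / Real.sqrt (4 - x ^ 2)) x := by
  have hpos : 0 < 4 - x ^ 2 := by nlinarith [hx.1, hx.2]
  have hs : (Real.sqrt (4 - x ^ 2) : ℂ) ≠ 0 := by exact_mod_cast (Real.sqrt_pos.2 hpos).ne'
  have hroot := (((hasDerivAt_pow 2 x).const_sub 4).sqrt hpos.ne').ofReal_comp
  refine ((((hasDerivAt_id x).ofReal_comp).add (hroot.const_mul I)).div_const 2).congr_deriv ?_
  rw [joukowskyUpperInv]
  push_cast
  field_simp
  linear_combination (Real.sqrt (4 - x ^ 2) : ℂ) * I_sq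

theorem continuous_joukowskyUpperInv : Continuous joukowskyUpperInv := by
  unfold joukowskyUpperInv; fun_prop

end joukowskyUpperInv

theorem semicirclePrimitiveDeriv_mul_deriv_joukowskyUpperInv {z : ℂ} {x : ℝ} (hz : z ≠ 0)
    (hx : x ∈ Ioo (-2) 2) (hwz : joukowskyUpperInv x - z ≠ 0)
    (hzw : 1 - z * joukowskyUpperInv x ≠ 0) :
    semicirclePrimitiveDeriv z (joukowskyUpperInv x) *
        (-I * joukowskyUpperInv x / Real.sqrt (4 - x ^ 2)) =
      Real.sqrt (4 - x ^ 2) / (x - (z + z⁻¹)) := by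
  set w := joukowskyUpperInv x
  set s : ℂ := (Real.sqrt (4 - x ^ 2) : ℂ)
  have hs : s ≠ 0 := by
    have : 0 < 4 - x ^ 2 := by nlinarith [hx.1, hx.2]
    exact ofReal_ne_zero.2 (Real.sqrt_pos.2 this).ne'
  have hsub : w - w⁻¹ = I * s := joukowskyUpperInv_sub_inv (Ioo_subset_Icc_self hx)
  have hadd : w + w⁻¹ = x := joukowskyUpperInv_add_inv (Ioo_subset_Icc_self hx)
  have hw1 : w - w⁻¹ ≠ 0 := by rw [hsub]; exact mul_ne_zero I_ne_zero hs
  calc semicirclePrimitiveDeriv z w * (-I * w / s)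
      = semicirclePrimitiveDeriv z w * (w / (w - w⁻¹)) := by
        rw [hsub]; field_simp; rw [I_sq]; ring
    _ = -I * (w - w⁻¹) / (w + w⁻¹ - (z + z⁻¹)) :=
        semicirclePrimitiveDeriv_mul_eq hz (joukowskyUpperInv_ne_zero (Ioo_subset_Icc_self hx))
          hwz hzw hw1
    _ = s / (x - (z + z⁻¹)) := by
        rw [hsub, hadd, ← mul_assoc, neg_mul, I_mul_I, neg_neg, one_mul]

theorem integral_sqrt_div_sub_add_inv {z : ℂ} (hz : ‖z‖ < 1) (hzim : z.im < 0) :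
    ∫ x in (-2 : ℝ)..2, (Real.sqrt (4 - x ^ 2) : ℂ) / ((x : ℂ) - (z + z⁻¹)) =
      -2 * Real.pi * z := by
  have hz0 : z ≠ 0 := by rintro rfl; simp at hzim
  have hslit (x : ℝ) (hx : x ∈ Icc (-2) 2) : -I * joukowskyUpperInv x ∈ slitPlane ∧
      joukowskyUpperInv x - z ∈ slitPlane ∧ 1 - z * joukowskyUpperInv x ∈ slitPlane := by
    refine ⟨neg_I_mul_mem_slitPlane (joukowskyUpperInv_ne_zero hx) (joukowskyUpperInv_im_nonneg x),
      mem_slitPlane_iff.2 (Or.inr ?_), ?_⟩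
    · have := joukowskyUpperInv_im_nonneg x
      rw [sub_im]; linarith
    · have hzw : ‖-(z * joukowskyUpperInv x)‖ < 1 := by
        rwa [norm_neg, norm_mul, norm_joukowskyUpperInv hx, mul_one]
      simpa [sub_eq_add_neg] using mem_slitPlane_of_norm_lt_one hzw
  have hH (x : ℝ) (hx : x ∈ Icc (-2) 2) := hasDerivAt_semicirclePrimitive (hslit x hx).1
    (hslit x hx).2.1 (hslit x hx).2.2
  have hF (x : ℝ) (hx : x ∈ Ioo (-2) 2) : HasDerivAt (semicirclePrimitive z ∘ joukowskyUpperInv)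
      ((Real.sqrt (4 - x ^ 2) : ℂ) / ((x : ℂ) - (z + z⁻¹))) x := by
    obtain ⟨-, hsub, hone⟩ := hslit x (Ioo_subset_Icc_self hx)
    refine ((hH x (Ioo_subset_Icc_self hx)).comp x (hasDerivAt_joukowskyUpperInv hx)).congr_deriv ?_
    exact semicirclePrimitiveDeriv_mul_deriv_joukowskyUpperInv hz0 hx (slitPlane_ne_zero hsub)
      (slitPlane_ne_zero hone)
  have hden (x : ℝ) : (x : ℂ) - (z + z⁻¹) ≠ 0 := by
    intro h
    have := congrArg im h
    simp only [sub_im, ofReal_im, zero_sub, zero_im, neg_eq_zero] at this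
    exact ((im_add_inv_pos_iff hz).2 hzim).ne' this
  have hcont : Continuous fun x : ℝ => (Real.sqrt (4 - x ^ 2) : ℂ) / ((x : ℂ) - (z + z⁻¹)) :=
    Continuous.div (by fun_prop) (by fun_prop) hden
  rw [intervalIntegral.integral_eq_sub_of_hasDerivAt_of_le (by norm_num)
    (fun x hx => (hH x hx).continuousAt.comp_continuousWithinAt
      continuous_joukowskyUpperInv.continuousWithinAt) hF (hcont.intervalIntegrable _ _)]
  have h2 : joukowskyUpperInv 2 = 1 := by norm_num [joukowskyUpperInv]
  have hm2 : joukowskyUpperInv (-2) = -1 := by norm_num [joukowskyUpperInv]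
  simpa only [Function.comp, h2, hm2] using semicirclePrimitive_one_sub_neg_one hzim

/-- The Stieltjes transform of the semicircle-type measure
`dρ(x) = (2π)⁻¹ √(4-x²) dx` on `(-2,2)` equals `-z(λ)` for `Im λ > 0`, where
`z(λ)` is the root of `z² - λz + 1 = 0` with `|z| < 1`. -/
theorem stieltjes_transform_semicircle
    (lam : ℂ) (hlam : 0 < lam.im)
    (z : ℂ) (hroot : z ^ 2 - lam * z + 1 = 0) (hz : ‖z‖ < 1) :
    (1 / (2 * (Real.pi : ℂ))) *
        ∫ x in (-2 : ℝ)..2, (Real.sqrt (4 - x ^ 2) : ℂ) / ((x : ℂ) - lam)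
      = -z := by
  have hz0 : z ≠ 0 := by rintro rfl; simp at hroot
  have hlam_eq : lam = z + z⁻¹ := by
    field_simp
    linear_combination -hroot
  subst hlam_eq
  rw [integral_sqrt_div_sub_add_inv hz ((im_add_inv_pos_iff hz).1 hlam)]
  field_simp [Real.pi_ne_zero]
end
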